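/- Let $a \in [0,1)$ and define $\tilde{e}_0 = 1$, $\tilde{e}_k = \sqrt{1-a^2} \sum_{m=0}^{\infty} a^m e_{k \cdot 2^m}$ for odd $k$, and $\tilde{e}_k = (1-a^2) \sum_{m=0}^{\infty} a^m e_{k \cdot 2^m} - a e_{k/2}$ for even nonzero $k$, where $e_j(x) = e^{2\pi i j x}$. Then $\{\tilde{e}_k\}_{k \in \mathbb{Z}}$ is an orthonormal family in $L^2([0,1])$. -/

import Mathlib

open MeasureTheory

/-- The classical Fourier character `e_j(x) = exp(2πijx)`. -/
noncomputable def fourierE (j : ℤ) (x : ℝ) : ℂ :=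
  Complex.exp (2 * Real.pi * Complex.I * j * x)

/-- `ê_k = √(1-a²) ∑_{m≥0} aᵐ e_{k·2ᵐ}`. -/
noncomputable def hatE (a : ℝ) (k : ℤ) (x : ℝ) : ℂ :=
  (Real.sqrt (1 - a ^ 2) : ℂ) * ∑' m : ℕ, (a : ℂ) ^ m * fourierE (k * 2 ^ m) x

/-- The Weierstrass Fourier basis functions `ẽ_k`. -/
noncomputable def tildeE (a : ℝ) (k : ℤ) (x : ℝ) : ℂ :=
  if k = 0 then 1
  else if Odd k then hatE a k x
  else ((1 - a ^ 2 : ℝ) : ℂ) * ∑' m : ℕ, (a : ℂ) ^ m * fourierE (k * 2 ^ m) x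
       - (a : ℂ) * fourierE (k / 2) x

/-- The `L²([0,1])` inner product `⟨f, g⟩ = ∫₀¹ f ḡ`. -/
noncomputable def inner01 (f g : ℝ → ℂ) : ℂ :=
  ∫ x in Set.Icc (0:ℝ) 1, f x * (starRingEnd ℂ) (g x)

set_option linter.unusedSectionVars false
set_option linter.unusedVariables false
set_option maxHeartbeats 1000000



lemma fourierE_cont (j : ℤ) : Continuous (fourierE j) := by
  unfold fourierE; fun_prop

lemma fourierE_zero (x : ℝ) : fourierE 0 x = 1 := by
  simp [fourierE]

lemma fourierE_norm (j : ℤ) (x : ℝ) : ‖fourierE j x‖ = 1 := by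
  rw [fourierE, Complex.norm_exp]
  have : (2 * Real.pi * Complex.I * j * x).re = 0 := by
    simp [Complex.mul_re, Complex.mul_im]
  simp [this]

lemma fourierE_conj (j : ℤ) (x : ℝ) :
    (starRingEnd ℂ) (fourierE j x) = fourierE (-j) x := by
  rw [fourierE, fourierE, ← Complex.exp_conj]
  rw [map_mul, map_mul, map_mul]
  simp [Complex.conj_I, Complex.conj_ofReal, map_ofNat]

lemma fourierE_mul (j k : ℤ) (x : ℝ) :
    fourierE j x * fourierE k x = fourierE (j + k) x := by
  rw [fourierE, fourierE, fourierE, ← Complex.exp_add]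
  congr 1
  push_cast
  ring

lemma integral_fourierE (n : ℤ) :
    ∫ x in Set.Icc (0:ℝ) 1, fourierE n x = if n = 0 then 1 else 0 := by
  rw [MeasureTheory.integral_Icc_eq_integral_Ioc, ← intervalIntegral.integral_of_le zero_le_one]
  by_cases hn : n = 0
  · simp [hn, fourierE_zero]
  · have hc : (2 * Real.pi * Complex.I * n) ≠ 0 := by
      simp [Real.pi_ne_zero, Complex.I_ne_zero, hn]
    have : ∀ x : ℝ, fourierE n x = Complex.exp ((2 * Real.pi * Complex.I * n) * x) := by
      intro x; rfl
    simp_rw [this]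
    rw [integral_exp_mul_complex hc]
    simp [hn]
    rw [mul_comm ((2:ℂ) * Real.pi * Complex.I) (n:ℂ)]
    rw [Complex.exp_int_mul_two_pi_mul_I]
    simp

lemma inner01_fourier (j k : ℤ) :
    inner01 (fourierE j) (fourierE k) = if j = k then 1 else 0 := by
  unfold inner01
  have : ∀ x : ℝ, fourierE j x * (starRingEnd ℂ) (fourierE k x) = fourierE (j - k) x := by
    intro x; rw [fourierE_conj, fourierE_mul]; ring_nf
  simp_rw [this, integral_fourierE, sub_eq_zero]
noncomputable def G (a : ℝ) (j : ℤ) (x : ℝ) : ℂ :=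
  ∑' m : ℕ, (a : ℂ) ^ m * fourierE (j * 2 ^ m) x

section
variable {a : ℝ} (ha0 : 0 ≤ a) (ha1 : a < 1)

include ha0

lemma term_norm (j : ℤ) (m : ℕ) (x : ℝ) :
    ‖(a : ℂ) ^ m * fourierE (j * 2 ^ m) x‖ = a ^ m := by
  rw [norm_mul, norm_pow, fourierE_norm, Complex.norm_real, Real.norm_of_nonneg ha0, mul_one]

include ha1

lemma G_summable (j : ℤ) (x : ℝ) :
    Summable (fun m : ℕ => (a : ℂ) ^ m * fourierE (j * 2 ^ m) x) := by
  apply Summable.of_norm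
  simp_rw [term_norm ha0]
  exact summable_geometric_of_lt_one ha0 ha1

lemma G_cont (j : ℤ) : Continuous (G a j) := by
  apply continuous_tsum (u := fun m : ℕ => a ^ m)
  · intro m; exact (continuous_const.mul (fourierE_cont _))
  · exact summable_geometric_of_lt_one ha0 ha1
  · intro m x; rw [term_norm ha0]

lemma G_norm_le (j : ℤ) (x : ℝ) : ‖G a j x‖ ≤ (1 - a)⁻¹ := by
  refine le_trans (norm_tsum_le_tsum_norm ?_) ?_
  · simp_rw [term_norm ha0]; exact summable_geometric_of_lt_one ha0 ha1
  · simp_rw [term_norm ha0]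
    rw [tsum_geometric_of_lt_one ha0 ha1]

end

section
variable {a : ℝ} (ha0 : 0 ≤ a) (ha1 : a < 1)
include ha0 ha1

lemma integrable_term (j : ℤ) (m : ℕ) (g : ℝ → ℂ) (hg : Continuous g) :
    IntegrableOn (fun x => (a : ℂ) ^ m * fourierE (j * 2 ^ m) x * (starRingEnd ℂ) (g x))
      (Set.Icc (0:ℝ) 1) := by
  apply Continuous.integrableOn_Icc
  exact (continuous_const.mul (fourierE_cont _)).mul (Complex.continuous_conj.comp hg)

lemma norm_term_mul (j : ℤ) (m : ℕ) (l : ℤ) (x : ℝ) :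
    ‖(a : ℂ) ^ m * fourierE (j * 2 ^ m) x * (starRingEnd ℂ) (fourierE l x)‖ = a ^ m := by
  rw [norm_mul, term_norm ha0, starRingEnd_apply, norm_star, fourierE_norm, mul_one]

lemma integral_norm_term (j : ℤ) (m : ℕ) (l : ℤ) :
    (∫ x in Set.Icc (0:ℝ) 1,
      ‖(a : ℂ) ^ m * fourierE (j * 2 ^ m) x * (starRingEnd ℂ) (fourierE l x)‖) = a ^ m := by
  simp_rw [norm_term_mul ha0 ha1]
  simp [Real.volume_Icc]

include ha1

lemma inner01_G_fourier (j l : ℤ) :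
    inner01 (G a j) (fourierE l) =
      ∑' m : ℕ, (a : ℂ) ^ m * (if j * 2 ^ m = l then 1 else 0) := by
  unfold inner01
  have h1 : ∀ x : ℝ, G a j x * (starRingEnd ℂ) (fourierE l x) =
      ∑' m : ℕ, (a : ℂ) ^ m * fourierE (j * 2 ^ m) x * (starRingEnd ℂ) (fourierE l x) := by
    intro x; rw [G, ← tsum_mul_right]
  simp_rw [h1]
  rw [← integral_tsum_of_summable_integral_norm]
  · congr 1; funext m
    simp_rw [mul_assoc]
    rw [MeasureTheory.integral_const_mul, ← inner01, inner01_fourier]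
  · intro m; exact integrable_term ha0 ha1 j m (fourierE l) (fourierE_cont l)
  · simp_rw [integral_norm_term ha0 ha1]
    exact summable_geometric_of_lt_one ha0 ha1

lemma inner01_fourier_G (l k : ℤ) :
    inner01 (fourierE l) (G a k) =
      ∑' n : ℕ, (a : ℂ) ^ n * (if l = k * 2 ^ n then 1 else 0) := by
  unfold inner01
  have h1 : ∀ x : ℝ, fourierE l x * (starRingEnd ℂ) (G a k x) =
      ∑' n : ℕ, (a : ℂ) ^ n * (fourierE l x * (starRingEnd ℂ) (fourierE (k * 2 ^ n) x)) := by
    intro x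
    rw [G, starRingEnd_apply, tsum_star, ← tsum_mul_left]
    congr 1; funext n
    rw [star_mul', ← starRingEnd_apply, ← starRingEnd_apply]
    rw [map_pow, Complex.conj_ofReal]
    ring
  simp_rw [h1]
  rw [← integral_tsum_of_summable_integral_norm]
  · congr 1; funext n
    rw [MeasureTheory.integral_const_mul, ← inner01, inner01_fourier]
  · intro n
    apply Continuous.integrableOn_Icc
    exact continuous_const.mul ((fourierE_cont _).mul
      (Complex.continuous_conj.comp (fourierE_cont _)))
  · have : ∀ n : ℕ, (∫ x in Set.Icc (0:ℝ) 1,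
        ‖(a : ℂ) ^ n * (fourierE l x * (starRingEnd ℂ) (fourierE (k * 2 ^ n) x))‖) = a ^ n := by
      intro n
      have h2 : ∀ x : ℝ,
          ‖(a : ℂ) ^ n * (fourierE l x * (starRingEnd ℂ) (fourierE (k * 2 ^ n) x))‖ = a ^ n := by
        intro x
        rw [norm_mul, norm_mul, fourierE_norm, starRingEnd_apply, norm_star, fourierE_norm]
        rw [norm_pow, Complex.norm_real, Real.norm_of_nonneg ha0]; ring
      simp_rw [h2]
      simp [Real.volume_Icc]
    simp_rw [this]
    exact summable_geometric_of_lt_one ha0 ha1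

lemma inner01_G_G (j k : ℤ) :
    inner01 (G a j) (G a k) =
      ∑' m : ℕ, (a : ℂ) ^ m *
        ∑' n : ℕ, (a : ℂ) ^ n * (if j * 2 ^ m = k * 2 ^ n then 1 else 0) := by
  unfold inner01
  have h1 : ∀ x : ℝ, G a j x * (starRingEnd ℂ) (G a k x) =
      ∑' m : ℕ, (a : ℂ) ^ m * fourierE (j * 2 ^ m) x * (starRingEnd ℂ) (G a k x) := by
    intro x; rw [G, ← tsum_mul_right]
  simp_rw [h1]
  rw [← integral_tsum_of_summable_integral_norm]
  · congr 1; funext m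
    simp_rw [mul_assoc]
    rw [MeasureTheory.integral_const_mul, ← inner01, inner01_fourier_G ha0 ha1]
  · intro m; exact integrable_term ha0 ha1 j m (G a k) (G_cont ha0 ha1 k)
  · apply Summable.of_nonneg_of_le
      (f := fun m : ℕ => a ^ m * (1 - a)⁻¹)
    · intro m
      apply MeasureTheory.integral_nonneg
      intro x; exact norm_nonneg _
    · intro m
      have hint : IntegrableOn
          (fun x => ‖(a : ℂ) ^ m * fourierE (j * 2 ^ m) x * (starRingEnd ℂ) (G a k x)‖)
          (Set.Icc (0:ℝ) 1) :=
        (integrable_term ha0 ha1 j m (G a k) (G_cont ha0 ha1 k)).norm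
      have hb : ∀ x : ℝ,
          ‖(a : ℂ) ^ m * fourierE (j * 2 ^ m) x * (starRingEnd ℂ) (G a k x)‖
            ≤ a ^ m * (1 - a)⁻¹ := by
        intro x
        rw [norm_mul, term_norm ha0, starRingEnd_apply, norm_star]
        exact mul_le_mul_of_nonneg_left (G_norm_le ha0 ha1 k x) (pow_nonneg ha0 m)
      calc (∫ x in Set.Icc (0:ℝ) 1,
            ‖(a : ℂ) ^ m * fourierE (j * 2 ^ m) x * (starRingEnd ℂ) (G a k x)‖)
          ≤ ∫ _x in Set.Icc (0:ℝ) 1, a ^ m * (1 - a)⁻¹ := by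
            apply MeasureTheory.integral_mono hint (integrableOn_const ?_) hb
            simp [Real.volume_Icc]
        _ = a ^ m * (1 - a)⁻¹ := by simp [Real.volume_Icc]
    · exact (summable_geometric_of_lt_one ha0 ha1).mul_right _

end

section NT

lemma odd_pow_eq_aux {u w : ℤ} (hu : Odd u) (hw : Odd w) {p q : ℕ} (hpq : p ≤ q)
    (h : u * 2 ^ p = w * 2 ^ q) : u = w ∧ p = q := by
  have h2 : u * 2 ^ p = (w * 2 ^ (q - p)) * 2 ^ p := by
    rw [h, mul_assoc, ← pow_add]
    congr 2
    omega
  have h3 : u = w * 2 ^ (q - p) :=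
    mul_right_cancel₀ (pow_ne_zero _ (by norm_num)) h2
  rcases Nat.eq_or_lt_of_le hpq with rfl | hlt
  · constructor
    · simpa using h3
    · rfl
  · exfalso
    have : (2 : ℤ) ∣ u := by
      rw [h3]
      exact Dvd.dvd.mul_left (dvd_pow_self 2 (by omega)) w
    rw [Int.odd_iff] at hu
    omega

lemma odd_pow_eq {u w : ℤ} (hu : Odd u) (hw : Odd w) {p q : ℕ}
    (h : u * 2 ^ p = w * 2 ^ q) : u = w ∧ p = q := by
  rcases le_total p q with hpq | hpq
  · exact odd_pow_eq_aux hu hw hpq h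
  · obtain ⟨h1, h2⟩ := odd_pow_eq_aux hw hu hpq h.symm
    exact ⟨h1.symm, h2.symm⟩

lemma exists_odd_factor : ∀ (j : ℤ), j ≠ 0 → ∃ (u : ℤ) (s : ℕ), Odd u ∧ j = u * 2 ^ s := by
  intro j hj
  by_cases h : Odd j
  · exact ⟨j, 0, h, by ring⟩
  · rw [Int.not_odd_iff_even] at h
    obtain ⟨c, hc⟩ := h
    have hc' : j = 2 * c := by omega
    have hcne : c ≠ 0 := by omega
    have hdec : c.natAbs < j.natAbs := by
      rw [hc', Int.natAbs_mul]
      have h2 : (2:ℤ).natAbs = 2 := rfl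
      rw [h2]
      omega
    obtain ⟨u, s, hu, rfl⟩ := exists_odd_factor c hcne
    exact ⟨u, s + 1, hu, by rw [hc', pow_succ]; ring⟩
termination_by j => j.natAbs

lemma int_cond {u : ℤ} (hu : u ≠ 0) (p q : ℕ) : u * 2 ^ p = u * 2 ^ q ↔ p = q := by
  constructor
  · intro h
    have h2 : (2 : ℤ) ^ p = 2 ^ q := mul_left_cancel₀ hu h
    have h3 : ((2 ^ p : ℕ) : ℤ) = ((2 ^ q : ℕ) : ℤ) := by push_cast; exact h2
    exact Nat.pow_right_injective (le_refl 2) (Int.ofNat_inj.mp h3)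
  · intro h; rw [h]

lemma cond_iff' {u : ℤ} (hu : u ≠ 0) (s t m n : ℕ) :
    u * 2 ^ s * 2 ^ m = u * 2 ^ t * 2 ^ n ↔ s + m = t + n := by
  rw [mul_assoc, mul_assoc, ← pow_add, ← pow_add, int_cond hu]

lemma cond_never {u w : ℤ} (hu : Odd u) (hw : Odd w) (huw : u ≠ w) (s t m n : ℕ) :
    ¬ (u * 2 ^ s * 2 ^ m = w * 2 ^ t * 2 ^ n) := by
  intro h
  rw [mul_assoc, mul_assoc, ← pow_add, ← pow_add] at h
  exact huw (odd_pow_eq hu hw h).1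

end NT

section Eval
variable {a : ℝ} (ha0 : 0 ≤ a) (ha1 : a < 1)
include ha0 ha1

lemma geo_sq : ∑' m : ℕ, ((a : ℂ) ^ 2) ^ m = (1 - (a : ℂ) ^ 2)⁻¹ := by
  apply tsum_geometric_of_norm_lt_one
  rw [← Complex.ofReal_pow, Complex.norm_real, Real.norm_of_nonneg (by positivity)]
  nlinarith

lemma eval_single (c : ℕ) :
    ∑' n : ℕ, (a : ℂ) ^ n * (if n = c then (1:ℂ) else 0) = (a : ℂ) ^ c := by
  rw [tsum_eq_single c]
  · simp
  · intro n hn; simp [hn]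

lemma eval_single_zero {P : ℕ → Prop} [DecidablePred P] (hP : ∀ n, ¬ P n) :
    ∑' n : ℕ, (a : ℂ) ^ n * (if P n then (1:ℂ) else 0) = 0 := by
  have : ∀ n : ℕ, (a : ℂ) ^ n * (if P n then (1:ℂ) else 0) = 0 := by
    intro n; simp [hP n]
  simp_rw [this, tsum_zero]

lemma eval_eq_shift (e : ℕ) :
    ∑' m : ℕ, (a : ℂ) ^ m * ∑' n : ℕ, (a : ℂ) ^ n * (if m + e = n then (1:ℂ) else 0)
      = (a : ℂ) ^ e * (1 - (a : ℂ) ^ 2)⁻¹ := by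
  have h1 : ∀ m : ℕ, (∑' n : ℕ, (a : ℂ) ^ n * (if m + e = n then (1:ℂ) else 0))
      = (a : ℂ) ^ (m + e) := by
    intro m
    rw [tsum_eq_single (m + e)]
    · simp
    · intro n hn
      simp [Ne.symm hn]
  simp_rw [h1]
  have h2 : ∀ m : ℕ, (a : ℂ) ^ m * (a : ℂ) ^ (m + e) = (a : ℂ) ^ e * ((a : ℂ) ^ 2) ^ m := by
    intro m; rw [← pow_mul, ← pow_add, ← pow_add]; ring_nf
  simp_rw [h2]
  rw [tsum_mul_left, geo_sq ha0 ha1]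

lemma eval_shift_eq (e : ℕ) :
    ∑' m : ℕ, (a : ℂ) ^ m * ∑' n : ℕ, (a : ℂ) ^ n * (if m = n + e then (1:ℂ) else 0)
      = (a : ℂ) ^ e * (1 - (a : ℂ) ^ 2)⁻¹ := by
  have h1 : ∀ m : ℕ, (∑' n : ℕ, (a : ℂ) ^ n * (if m = n + e then (1:ℂ) else 0))
      = if e ≤ m then (a : ℂ) ^ (m - e) else 0 := by
    intro m
    by_cases he : e ≤ m
    · rw [tsum_eq_single (m - e)]
      · simp [he, Nat.sub_add_cancel he]
      · intro n hn
        have : ¬ (m = n + e) := by omega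
        simp [this]
    · have : ∀ n : ℕ, (a : ℂ) ^ n * (if m = n + e then (1:ℂ) else 0) = 0 := by
        intro n
        have : ¬ (m = n + e) := by omega
        simp [this]
      simp_rw [this, tsum_zero]
      simp [he]
  simp_rw [h1]
  set f : ℕ → ℂ := fun m => (a : ℂ) ^ m * (if e ≤ m then (a : ℂ) ^ (m - e) else 0) with hf
  have hsum : Summable f := by
    apply Summable.of_norm_bounded (g := fun m : ℕ => a ^ m)
      (summable_geometric_of_lt_one ha0 ha1)
    intro m
    rw [hf]
    simp only [norm_mul, norm_pow, Complex.norm_real, Real.norm_of_nonneg ha0]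
    by_cases he : e ≤ m
    · simp only [he, if_true]
      calc a ^ m * ‖(a:ℂ) ^ (m - e)‖ = a ^ m * a ^ (m - e) := by
            rw [norm_pow, Complex.norm_real, Real.norm_of_nonneg ha0]
        _ ≤ a ^ m * 1 := by
            apply mul_le_mul_of_nonneg_left _ (pow_nonneg ha0 m)
            exact pow_le_one₀ ha0 (le_of_lt ha1)
        _ = a ^ m := mul_one _
    · simp [he, pow_nonneg ha0]
  rw [← Summable.sum_add_tsum_nat_add e hsum]
  have hz : ∑ i ∈ Finset.range e, f i = 0 := by
    apply Finset.sum_eq_zero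
    intro i hi
    rw [Finset.mem_range] at hi
    rw [hf]
    simp [Nat.not_le.mpr hi]
  rw [hz, zero_add]
  have h3 : ∀ i : ℕ, f (i + e) = (a : ℂ) ^ e * ((a : ℂ) ^ 2) ^ i := by
    intro i
    rw [hf]
    simp only [le_add_iff_nonneg_left, Nat.zero_le, if_true, Nat.add_sub_cancel]
    rw [← pow_mul, ← pow_add, ← pow_add]
    ring_nf
  simp_rw [h3]
  rw [tsum_mul_left, geo_sq ha0 ha1]

end Eval

section Algebra

lemma inner01_mul_left (c : ℂ) (f g : ℝ → ℂ) :
    inner01 (fun x => c * f x) g = c * inner01 f g := by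
  unfold inner01
  simp_rw [mul_assoc]
  rw [MeasureTheory.integral_const_mul]

lemma inner01_mul_right (c : ℂ) (f g : ℝ → ℂ) :
    inner01 f (fun x => c * g x) = (starRingEnd ℂ) c * inner01 f g := by
  unfold inner01
  have h : ∀ x : ℝ, f x * (starRingEnd ℂ) (c * g x)
      = (starRingEnd ℂ) c * (f x * (starRingEnd ℂ) (g x)) := by
    intro x
    rw [map_mul]
    ring
  simp_rw [h]
  rw [MeasureTheory.integral_const_mul]

lemma inner01_conj (f g : ℝ → ℂ) : inner01 f g = (starRingEnd ℂ) (inner01 g f) := by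
  unfold inner01
  rw [← integral_conj]
  congr 1
  funext x
  rw [map_mul, Complex.conj_conj, mul_comm]

lemma inner01_sub_right (f g h : ℝ → ℂ) (hf : Continuous f) (hg : Continuous g)
    (hh : Continuous h) :
    inner01 f (fun x => g x - h x) = inner01 f g - inner01 f h := by
  unfold inner01
  simp_rw [map_sub, mul_sub]
  apply MeasureTheory.integral_sub
  · exact (hf.mul (Complex.continuous_conj.comp hg)).integrableOn_Icc
  · exact (hf.mul (Complex.continuous_conj.comp hh)).integrableOn_Icc

lemma inner01_sub_left (f h g : ℝ → ℂ) (hf : Continuous f) (hh : Continuous h)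
    (hg : Continuous g) :
    inner01 (fun x => f x - h x) g = inner01 f g - inner01 h g := by
  unfold inner01
  simp_rw [sub_mul]
  apply MeasureTheory.integral_sub
  · exact (hf.mul (Complex.continuous_conj.comp hg)).integrableOn_Icc
  · exact (hh.mul (Complex.continuous_conj.comp hg)).integrableOn_Icc

end Algebra

section TildeRw

lemma odd_ne_zero {k : ℤ} (hk : Odd k) : k ≠ 0 := by
  rintro rfl
  simp [Int.odd_iff] at hk

lemma tildeE_zero (a : ℝ) : tildeE a 0 = fourierE 0 := by
  funext x
  simp [tildeE, fourierE]

lemma tildeE_odd (a : ℝ) {k : ℤ} (hk : Odd k) :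
    tildeE a k = fun x => ((Real.sqrt (1 - a ^ 2) : ℝ) : ℂ) * G a k x := by
  funext x
  simp [tildeE, hatE, G, odd_ne_zero hk, hk]

lemma tildeE_even (a : ℝ) {k : ℤ} (h0 : k ≠ 0) (hk : ¬ Odd k) :
    tildeE a k = fun x => ((1 - a ^ 2 : ℝ) : ℂ) * G a k x - (a : ℂ) * fourierE (k / 2) x := by
  funext x
  simp [tildeE, G, h0, hk]

lemma even_half {k : ℤ} (hk : ¬ Odd k) : 2 * (k / 2) = k := by
  rw [Int.not_odd_iff_even] at hk
  exact Int.two_mul_ediv_two_of_even hk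

lemma pow_half {u : ℤ} {t : ℕ} (ht : 1 ≤ t) : (u * 2 ^ t) / 2 = u * 2 ^ (t - 1) := by
  obtain ⟨r, rfl⟩ : ∃ r, t = r + 1 := ⟨t - 1, by omega⟩
  have h : u * 2 ^ (r + 1) = 2 * (u * 2 ^ r) := by rw [pow_succ]; ring
  rw [h, Int.mul_ediv_cancel_left _ (by norm_num)]
  simp

lemma even_pow_not_odd {u : ℤ} {t : ℕ} (ht : 1 ≤ t) : ¬ Odd (u * 2 ^ t) := by
  rw [Int.not_odd_iff_even]
  obtain ⟨r, rfl⟩ : ∃ r, t = r + 1 := ⟨t - 1, by omega⟩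
  refine Even.mul_left ?_ u
  rw [pow_succ]
  exact Even.mul_left even_two _

end TildeRw

section Cases
variable {a : ℝ} (ha0 : 0 ≤ a) (ha1 : a < 1)
include ha0 ha1

lemma sqrt_mul_self' : ((Real.sqrt (1 - a ^ 2) : ℝ) : ℂ) * ((Real.sqrt (1 - a ^ 2) : ℝ) : ℂ)
    = 1 - (a : ℂ) ^ 2 := by
  rw [← Complex.ofReal_mul, Real.mul_self_sqrt (by nlinarith)]
  push_cast
  ring

lemma one_sub_sq_ne : (1 : ℂ) - (a : ℂ) ^ 2 ≠ 0 := by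
  have h : ((1 - a ^ 2 : ℝ) : ℂ) ≠ 0 := by
    rw [Ne, Complex.ofReal_eq_zero]
    nlinarith
  have h2 : (1 : ℂ) - (a : ℂ) ^ 2 = ((1 - a ^ 2 : ℝ) : ℂ) := by
    rw [Complex.ofReal_sub, Complex.ofReal_one, Complex.ofReal_pow]
  rw [h2]
  exact h

lemma case_zero (k : ℤ) (hk : k ≠ 0) : inner01 (tildeE a 0) (tildeE a k) = 0 := by
  rw [tildeE_zero]
  by_cases hok : Odd k
  · rw [tildeE_odd a hok, inner01_mul_right, inner01_fourier_G ha0 ha1]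
    have h : ∀ n : ℕ, ((0 : ℤ) = k * 2 ^ n) = False := by
      intro n
      apply eq_false
      intro h
      exact hk (by simpa using h.symm)
    simp only [h, if_false, mul_zero, tsum_zero]
  · rw [tildeE_even a hk hok,
      inner01_sub_right _ _ _ (fourierE_cont 0)
        (continuous_const.fun_mul (G_cont ha0 ha1 k))
        (continuous_const.fun_mul (fourierE_cont (k / 2))),
      inner01_mul_right, inner01_mul_right, inner01_fourier_G ha0 ha1, inner01_fourier]
    have h : ∀ n : ℕ, ((0 : ℤ) = k * 2 ^ n) = False := by
      intro n
      apply eq_false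
      intro h
      exact hk (by simpa using h.symm)
    simp only [h, if_false, mul_zero, tsum_zero]
    have h2 : ((0 : ℤ) = k / 2) = False := by
      apply eq_false
      intro h2
      apply hk
      have := even_half hok
      omega
    simp only [h2, if_false, mul_zero, sub_zero]

lemma case_oo {j k : ℤ} (hj : Odd j) (hk : Odd k) :
    inner01 (tildeE a j) (tildeE a k) = if j = k then 1 else 0 := by
  rw [tildeE_odd a hj, tildeE_odd a hk, inner01_mul_left, inner01_mul_right,
    Complex.conj_ofReal, ← mul_assoc, sqrt_mul_self' ha0 ha1, inner01_G_G ha0 ha1]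
  by_cases hjk : j = k
  · subst hjk
    have h : ∀ m n : ℕ, (j * 2 ^ m = j * 2 ^ n) = (m + 0 = n) := by
      intro m n
      apply propext
      rw [int_cond (odd_ne_zero hj) m n]
      omega
    simp only [h]
    rw [eval_eq_shift ha0 ha1 0]
    simp only [pow_zero, one_mul, if_true]
    exact mul_inv_cancel₀ (one_sub_sq_ne ha0 ha1)
  · have h : ∀ m n : ℕ, (j * 2 ^ m = k * 2 ^ n) = False := by
      intro m n
      apply eq_false
      intro h
      exact hjk (odd_pow_eq hj hk h).1
    simp only [h, if_false, mul_zero, tsum_zero, if_neg hjk]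

lemma case_oe {j : ℤ} (hj : Odd j) (w : ℤ) (hw : Odd w) (t : ℕ) (ht : 1 ≤ t) :
    inner01 (tildeE a j) (tildeE a (w * 2 ^ t)) = 0 := by
  have hk0 : w * 2 ^ t ≠ 0 := mul_ne_zero (odd_ne_zero hw) (pow_ne_zero _ (by norm_num))
  rw [tildeE_odd a hj, tildeE_even a hk0 (even_pow_not_odd ht), inner01_mul_left,
    inner01_sub_right _ _ _ (G_cont ha0 ha1 j)
      (continuous_const.fun_mul (G_cont ha0 ha1 _))
      (continuous_const.fun_mul (fourierE_cont _)),
    inner01_mul_right, inner01_mul_right, Complex.conj_ofReal, Complex.conj_ofReal,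
    inner01_G_G ha0 ha1, pow_half ht, inner01_G_fourier ha0 ha1]
  by_cases hjw : j = w
  · subst hjw
    have h1 : ∀ m n : ℕ, (j * 2 ^ m = j * 2 ^ t * 2 ^ n) = (m = n + t) := by
      intro m n
      apply propext
      rw [mul_assoc, ← pow_add, int_cond (odd_ne_zero hj) m (t + n)]
      omega
    have h2 : ∀ m : ℕ, (j * 2 ^ m = j * 2 ^ (t - 1)) = (m = t - 1) := by
      intro m
      exact propext (int_cond (odd_ne_zero hj) m (t - 1))
    simp only [h1, h2]
    rw [eval_shift_eq ha0 ha1 t, eval_single ha0 ha1]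
    have h3 : (a : ℂ) * (a : ℂ) ^ (t - 1) = (a : ℂ) ^ t := by
      rw [← pow_succ']
      congr 1
      omega
    have hc1 : ((1 - a ^ 2 : ℝ) : ℂ) = 1 - (a : ℂ) ^ 2 := by
      rw [Complex.ofReal_sub, Complex.ofReal_one, Complex.ofReal_pow]
    have hne : (1 : ℂ) - (a : ℂ) ^ 2 ≠ 0 := one_sub_sq_ne ha0 ha1
    rw [h3, hc1]
    field_simp
    ring
  · have h1 : ∀ m n : ℕ, (j * 2 ^ m = w * 2 ^ t * 2 ^ n) = False := by
      intro m n
      apply eq_false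
      rw [mul_assoc, ← pow_add]
      intro h
      exact hjw (odd_pow_eq hj hw h).1
    have h2 : ∀ m : ℕ, (j * 2 ^ m = w * 2 ^ (t - 1)) = False := by
      intro m
      apply eq_false
      intro h
      exact hjw (odd_pow_eq hj hw h).1
    simp only [h1, h2, if_false, mul_zero, tsum_zero, sub_zero]

lemma case_ee_ne (u w : ℤ) (hu : Odd u) (hw : Odd w) (huw : u ≠ w) (s t : ℕ)
    (hs : 1 ≤ s) (ht : 1 ≤ t) :
    inner01 (tildeE a (u * 2 ^ s)) (tildeE a (w * 2 ^ t)) = 0 := by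
  have hj0 : u * 2 ^ s ≠ 0 := mul_ne_zero (odd_ne_zero hu) (pow_ne_zero _ (by norm_num))
  have hk0 : w * 2 ^ t ≠ 0 := mul_ne_zero (odd_ne_zero hw) (pow_ne_zero _ (by norm_num))
  rw [tildeE_even a hj0 (even_pow_not_odd hs), tildeE_even a hk0 (even_pow_not_odd ht),
    inner01_sub_left _ _ _
      (continuous_const.fun_mul (G_cont ha0 ha1 _))
      (continuous_const.fun_mul (fourierE_cont _))
      ((continuous_const.fun_mul (G_cont ha0 ha1 _)).fun_sub
        (continuous_const.fun_mul (fourierE_cont _))),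
    inner01_sub_right _ _ _ (continuous_const.fun_mul (G_cont ha0 ha1 _))
      (continuous_const.fun_mul (G_cont ha0 ha1 _))
      (continuous_const.fun_mul (fourierE_cont _)),
    inner01_sub_right _ _ _ (continuous_const.fun_mul (fourierE_cont _))
      (continuous_const.fun_mul (G_cont ha0 ha1 _))
      (continuous_const.fun_mul (fourierE_cont _)),
    inner01_mul_left, inner01_mul_left, inner01_mul_left, inner01_mul_left,
    inner01_mul_right, inner01_mul_right, inner01_mul_right, inner01_mul_right,
    pow_half hs, pow_half ht, inner01_G_G ha0 ha1, inner01_G_fourier ha0 ha1,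
    inner01_fourier_G ha0 ha1, inner01_fourier]
  have h1 : ∀ m n : ℕ, (u * 2 ^ s * 2 ^ m = w * 2 ^ t * 2 ^ n) = False := by
    intro m n
    exact eq_false (cond_never hu hw huw s t m n)
  have h2 : ∀ m : ℕ, (u * 2 ^ s * 2 ^ m = w * 2 ^ (t - 1)) = False := by
    intro m
    apply eq_false
    rw [mul_assoc, ← pow_add]
    intro h
    exact huw (odd_pow_eq hu hw h).1
  have h3 : ∀ n : ℕ, (u * 2 ^ (s - 1) = w * 2 ^ t * 2 ^ n) = False := by
    intro n
    apply eq_false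
    rw [mul_assoc, ← pow_add]
    intro h
    exact huw (odd_pow_eq hu hw h).1
  have h4 : (u * 2 ^ (s - 1) = w * 2 ^ (t - 1)) = False := by
    apply eq_false
    intro h
    exact huw (odd_pow_eq hu hw h).1
  simp only [h1, h2, h3, h4, if_false, mul_zero, tsum_zero, sub_zero, sub_self]

lemma case_ee_le (u : ℤ) (hu : Odd u) (s t : ℕ) (hs : 1 ≤ s) (ht : 1 ≤ t) (hst : s ≤ t) :
    inner01 (tildeE a (u * 2 ^ s)) (tildeE a (u * 2 ^ t)) = if s = t then 1 else 0 := by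
  have hu0 : u ≠ 0 := odd_ne_zero hu
  have hj0 : u * 2 ^ s ≠ 0 := mul_ne_zero hu0 (pow_ne_zero _ (by norm_num))
  have hk0 : u * 2 ^ t ≠ 0 := mul_ne_zero hu0 (pow_ne_zero _ (by norm_num))
  rw [tildeE_even a hj0 (even_pow_not_odd hs), tildeE_even a hk0 (even_pow_not_odd ht),
    inner01_sub_left _ _ _
      (continuous_const.fun_mul (G_cont ha0 ha1 _))
      (continuous_const.fun_mul (fourierE_cont _))
      ((continuous_const.fun_mul (G_cont ha0 ha1 _)).fun_sub
        (continuous_const.fun_mul (fourierE_cont _))),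
    inner01_sub_right _ _ _ (continuous_const.fun_mul (G_cont ha0 ha1 _))
      (continuous_const.fun_mul (G_cont ha0 ha1 _))
      (continuous_const.fun_mul (fourierE_cont _)),
    inner01_sub_right _ _ _ (continuous_const.fun_mul (fourierE_cont _))
      (continuous_const.fun_mul (G_cont ha0 ha1 _))
      (continuous_const.fun_mul (fourierE_cont _)),
    inner01_mul_left, inner01_mul_left, inner01_mul_left, inner01_mul_left,
    inner01_mul_right, inner01_mul_right, inner01_mul_right, inner01_mul_right,
    pow_half hs, pow_half ht, inner01_G_G ha0 ha1, inner01_G_fourier ha0 ha1,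
    inner01_fourier_G ha0 ha1, inner01_fourier, Complex.conj_ofReal, Complex.conj_ofReal]
  have hc1 : ((1 - a ^ 2 : ℝ) : ℂ) = 1 - (a : ℂ) ^ 2 := by push_cast; ring
  have h1 : ∀ m n : ℕ, (u * 2 ^ s * 2 ^ m = u * 2 ^ t * 2 ^ n) = (m = n + (t - s)) := by
    intro m n
    apply propext
    rw [cond_iff' hu0 s t m n]
    omega
  have h3 : ∀ n : ℕ, (u * 2 ^ (s - 1) = u * 2 ^ t * 2 ^ n) = False := by
    intro n
    apply eq_false
    rw [mul_assoc, ← pow_add, int_cond hu0]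
    omega
  have h4 : (u * 2 ^ (s - 1) = u * 2 ^ (t - 1)) = (s = t) := by
    apply propext
    rw [int_cond hu0]
    omega
  simp only [h1, h3, h4, if_false, mul_zero, tsum_zero, sub_zero]
  rw [eval_shift_eq ha0 ha1 (t - s), hc1]
  by_cases hst' : s = t
  · subst hst'
    have h2 : ∀ m : ℕ, (u * 2 ^ s * 2 ^ m = u * 2 ^ (s - 1)) = False := by
      intro m
      apply eq_false
      rw [mul_assoc, ← pow_add, int_cond hu0]
      omega
    simp only [h2, if_false, mul_zero, tsum_zero, sub_zero]
    have hne := one_sub_sq_ne ha0 ha1 (a := a)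
    simp only [Nat.sub_self, pow_zero, if_true, one_mul, mul_one]
    field_simp
    ring
  · have hlt : s < t := lt_of_le_of_ne hst hst'
    have h2 : ∀ m : ℕ, (u * 2 ^ s * 2 ^ m = u * 2 ^ (t - 1)) = (m = t - 1 - s) := by
      intro m
      apply propext
      rw [mul_assoc, ← pow_add, int_cond hu0]
      omega
    simp only [h2]
    rw [eval_single ha0 ha1, if_neg hst']
    have h5 : (a : ℂ) * (a : ℂ) ^ (t - 1 - s) = (a : ℂ) ^ (t - s) := by
      rw [← pow_succ']
      congr 1
      omega
    have hne := one_sub_sq_ne ha0 ha1 (a := a)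
    rw [h5]
    field_simp
    ring

end Cases

/-- For `a ∈ [0,1)`, the family `{ẽ_k}_{k ∈ ℤ}` is orthonormal in `L²([0,1])`. -/
theorem dwft_stmt8 (a : ℝ) (ha0 : 0 ≤ a) (ha1 : a < 1) :
    ∀ j k : ℤ, inner01 (tildeE a j) (tildeE a k) = if j = k then 1 else 0 := by
  intro j k
  by_cases hj : j = 0
  · subst hj
    by_cases hk : k = 0
    · subst hk
      rw [tildeE_zero, inner01_fourier]
    · rw [case_zero ha0 ha1 k hk, if_neg (fun h => hk h.symm)]
  · by_cases hk : k = 0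
    · subst hk
      rw [inner01_conj, case_zero ha0 ha1 j hj, map_zero, if_neg hj]
    · by_cases hoj : Odd j
      · by_cases hok : Odd k
        · exact case_oo ha0 ha1 hoj hok
        · obtain ⟨w, t, hw, rfl⟩ := exists_odd_factor k hk
          have ht : 1 ≤ t := by
            rcases Nat.eq_zero_or_pos t with h | h
            · exfalso; apply hok; rw [h]; simpa using hw
            · exact h
          rw [case_oe ha0 ha1 hoj w hw t ht]
          rw [if_neg]
          intro h
          exact hok (h ▸ hoj)
      · by_cases hok : Odd k
        · obtain ⟨u, s, hu, rfl⟩ := exists_odd_factor j hj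
          have hs : 1 ≤ s := by
            rcases Nat.eq_zero_or_pos s with h | h
            · exfalso; apply hoj; rw [h]; simpa using hu
            · exact h
          rw [inner01_conj, case_oe ha0 ha1 hok u hu s hs, map_zero]
          rw [if_neg]
          intro h
          exact hoj (h ▸ hok)
        · obtain ⟨u, s, hu, rfl⟩ := exists_odd_factor j hj
          obtain ⟨w, t, hw, rfl⟩ := exists_odd_factor k hk
          have hs : 1 ≤ s := by
            rcases Nat.eq_zero_or_pos s with h | h
            · exfalso; apply hoj; rw [h]; simpa using hu
            · exact h
          have ht : 1 ≤ t := by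
            rcases Nat.eq_zero_or_pos t with h | h
            · exfalso; apply hok; rw [h]; simpa using hw
            · exact h
          by_cases huw : u = w
          · subst huw
            have hiff : (u * 2 ^ s = u * 2 ^ t) = (s = t) :=
              propext (int_cond (odd_ne_zero hu) s t)
            rcases le_total s t with h | h
            · rw [case_ee_le ha0 ha1 u hu s t hs ht h]
              simp only [hiff]
            · rw [inner01_conj, case_ee_le ha0 ha1 u hu t s ht hs h]
              simp only [hiff]
              by_cases hst : s = t
              · simp [hst]
              · rw [if_neg (fun hh => hst hh.symm), if_neg hst, map_zero]
          · rw [case_ee_ne ha0 ha1 u w hu hw huw s t hs ht]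
            rw [if_neg]
            intro h
            exact huw (odd_pow_eq hu hw h).1
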